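/- Define B_0(z) := 1 and B_n(z) := ∏_{j=1}^{n} (z - q^{j-1})/(1 - q^j) for n ≥ 1. Then for all nonnegative integers m and n: B_n(z) = y^n Σ_{j=0}^{n} ((y^{-1})_{n-j}/(q)_{n-j}) B_j(y^{-1} z), where (x)_k = ∏_{i=0}^{k-1}(1 - x q^i), in the field of rational functions in q, y, z. -/

import Mathlib

/-- The q-shifted factorial `(x)_k = ∏_{i=0}^{k-1} (1 - x q^i)`. -/
def qpoch {F : Type*} [Field F] (q x : F) (n : ℕ) : F :=
  ∏ i ∈ Finset.range n, (1 - x * q ^ i)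

/-- `B_n(z) = ∏_{j=1}^{n} (z - q^{j-1})/(1 - q^j)`. -/
def Bpoly {F : Type*} [Field F] (q z : F) (n : ℕ) : F :=
  ∏ j ∈ Finset.range n, (z - q ^ j) / (1 - q ^ (j + 1))

/-!
Writing `z = y w`, the identity is the q-Vandermonde convolution
`B_n(y w) = ∑_{j + k = n} y^j B_j(w) B_k(y)`, because `y^k (y⁻¹)_k / (q)_k = B_k(y)`.
The convolution follows by induction on `n` from the recurrence
`B_{n+1}(x) (1 - q^{n+1}) = B_n(x) (x - q^n)`: on the term indexed by `j + k = n + 1` split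
`1 - q^{n+1} = (1 - q^j) + q^j (1 - q^k)`, apply the recurrence to `B_j(w)` in the first part and
to `B_k(y)` in the second, and recombine using `y (w - q^j) + q^j (y - q^k) = y w - q^n`.
-/

open Finset

section

variable {F : Type*} [Field F] (q : F)

theorem Bpoly_succ_mul (z : F) {n : ℕ} (hn : 1 - q ^ (n + 1) ≠ 0) :
    Bpoly q z (n + 1) * (1 - q ^ (n + 1)) = Bpoly q z n * (z - q ^ n) := by
  rw [Bpoly, prod_range_succ, mul_assoc, div_mul_cancel₀ _ hn, Bpoly]

theorem pow_mul_qpoch_inv_div_qpoch {y : F} (hy : y ≠ 0) (k : ℕ) :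
    y ^ k * (qpoch q y⁻¹ k / qpoch q q k) = Bpoly q y k := by
  calc y ^ k * (qpoch q y⁻¹ k / qpoch q q k)
      = ∏ i ∈ range k, y * ((1 - y⁻¹ * q ^ i) / (1 - q * q ^ i)) := by
        rw [prod_mul_distrib, prod_const, card_range, prod_div_distrib, qpoch, qpoch]
    _ = Bpoly q y k := by
        refine prod_congr rfl fun i _ => ?_
        rw [← mul_div_assoc, mul_sub, mul_one, mul_inv_cancel_left₀ hy, pow_succ']

theorem Bpoly_mul_eq_sum_antidiagonal (hq : ∀ n : ℕ, 1 - q ^ (n + 1) ≠ 0) (y w : F)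
    (n : ℕ) : Bpoly q (y * w) n =
      ∑ p ∈ antidiagonal n, y ^ p.1 * Bpoly q w p.1 * Bpoly q y p.2 := by
  induction n with
  | zero => simp [Bpoly]
  | succ n ih =>
    apply mul_right_cancel₀ (hq n)
    have split : (∑ p ∈ antidiagonal (n + 1), y ^ p.1 * Bpoly q w p.1 * Bpoly q y p.2) *
          (1 - q ^ (n + 1)) =
        ∑ p ∈ antidiagonal (n + 1), y ^ p.1 * Bpoly q w p.1 * (1 - q ^ p.1) * Bpoly q y p.2 +
          ∑ p ∈ antidiagonal (n + 1),
            y ^ p.1 * Bpoly q w p.1 * q ^ p.1 * (Bpoly q y p.2 * (1 - q ^ p.2)) := by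
      rw [sum_mul, ← sum_add_distrib]
      refine sum_congr rfl fun p hp => ?_
      rw [← mem_antidiagonal.mp hp, pow_add]
      ring
    have shift_w : ∑ p ∈ antidiagonal (n + 1),
          y ^ p.1 * Bpoly q w p.1 * (1 - q ^ p.1) * Bpoly q y p.2 =
        ∑ p ∈ antidiagonal n,
          y ^ p.1 * Bpoly q w p.1 * Bpoly q y p.2 * (y * (w - q ^ p.1)) := by
      rw [Nat.sum_antidiagonal_succ]
      simp only [pow_zero, sub_self, mul_zero, zero_mul, zero_add]
      refine sum_congr rfl fun p _ => ?_
      linear_combination y ^ (p.1 + 1) * Bpoly q y p.2 * Bpoly_succ_mul q w (hq p.1)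
    have shift_y : ∑ p ∈ antidiagonal (n + 1),
          y ^ p.1 * Bpoly q w p.1 * q ^ p.1 * (Bpoly q y p.2 * (1 - q ^ p.2)) =
        ∑ p ∈ antidiagonal n,
          y ^ p.1 * Bpoly q w p.1 * Bpoly q y p.2 * (q ^ p.1 * (y - q ^ p.2)) := by
      rw [Nat.sum_antidiagonal_succ']
      simp only [pow_zero, sub_self, mul_zero, zero_add]
      refine sum_congr rfl fun p _ => ?_
      rw [Bpoly_succ_mul q y (hq p.2)]
      ring
    rw [Bpoly_succ_mul q _ (hq n), ih, split, shift_w, shift_y, ← sum_add_distrib, sum_mul]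
    refine sum_congr rfl fun p hp => ?_
    rw [← mem_antidiagonal.mp hp, pow_add]
    ring

end

theorem stmt_4_general {F : Type*} [Field F] (q y z : F) (hy : y ≠ 0)
    (hq1 : ∀ n : ℕ, 1 ≤ n → q ^ n ≠ 1) (n : ℕ) :
    Bpoly q z n =
      y ^ n * ∑ j ∈ Finset.range (n + 1),
        qpoch q y⁻¹ (n - j) / qpoch q q (n - j) * Bpoly q (y⁻¹ * z) j := by
  have hq : ∀ k : ℕ, 1 - q ^ (k + 1) ≠ 0 := fun k =>
    sub_ne_zero.mpr (hq1 (k + 1) k.succ_pos).symm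
  conv_lhs => rw [← mul_inv_cancel_left₀ hy z]
  rw [Bpoly_mul_eq_sum_antidiagonal q hq, Nat.sum_antidiagonal_eq_sum_range_succ
    (fun j k => y ^ j * Bpoly q (y⁻¹ * z) j * Bpoly q y k), mul_sum]
  refine sum_congr rfl fun j hj => ?_
  rw [← pow_sub_mul_pow y (Nat.lt_succ_iff.mp (mem_range.mp hj)),
    ← pow_mul_qpoch_inv_div_qpoch q hy]
  ring

theorem stmt_4 {F : Type*} [Field F] (q y z : F) (hq : q ≠ 0) (hy : y ≠ 0)
    (hq1 : ∀ n : ℕ, 1 ≤ n → q ^ n ≠ 1) (n : ℕ) :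
    Bpoly q z n =
      y ^ n * ∑ j ∈ Finset.range (n + 1),
        qpoch q y⁻¹ (n - j) / qpoch q q (n - j) * Bpoly q (y⁻¹ * z) j :=
  stmt_4_general q y z hy hq1 n
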